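/- Let m, p ∈ ℕ, let n be a positive integer, let x > 0 be real, and let g : (0,∞) → ℝ be any function. Define S : ℕ_{>0} → ℝ by S(n) = Σ_{k=1}^{n−1} C(n−k−1, m)·g(k). Then Σ_{k=1}^{n−1} C(n−k−1, m)·g(k) + Σ_{j=1}^{p+m} C(x, j)·Δ^j S(n) = Σ_{k=1}^{n−1} C(x+n−k−1, m)·g(k) + Σ_{j=1}^{p} C(x, m+j)·Δ^{j−1} g(n), where Δ^j S(n) = Σ_{i=0}^{j} C(j,i)·(−1)^{j−i}·S(n+i) and Δ^{j−1} g(n) = Σ_{i=0}^{j−1} C(j−1,i)·(−1)^{j−1−i}·g(n+i). -/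
import Mathlib


open Finset Filter

/-- Forward difference operator: `Δ f x = f (x + 1) - f x`. -/
noncomputable def fdiff (f : ℝ → ℝ) : ℝ → ℝ := fun x => f (x + 1) - f x

/-- Generalized binomial coefficient `C(x, j) = x (x-1) ⋯ (x-j+1) / j!`. -/
noncomputable def gbinom (x : ℝ) (j : ℕ) : ℝ :=
  (∏ i ∈ Finset.range j, (x - i)) / (Nat.factorial j)

/-- Divided difference of `f` at the points `x 0, …, x (n-1)`. -/
noncomputable def divDiff (f : ℝ → ℝ) {n : ℕ} (x : Fin n → ℝ) : ℝ :=
  ∑ i, f (x i) / ∏ j ∈ Finset.univ.erase i, (x i - x j)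

/-- `f` is `p`-convex on the set `S`: every divided difference of `f`
at `p + 2` pairwise distinct points of `S` is nonnegative. -/
def ConvexOrderOn (f : ℝ → ℝ) (p : ℕ) (S : Set ℝ) : Prop :=
  ∀ x : Fin (p + 2) → ℝ, (∀ i, x i ∈ S) → Function.Injective x → 0 ≤ divDiff f x

/-- The class `K^p`: functions that are eventually `p`-convex or eventually `p`-concave. -/
def EvK (p : ℕ) (f : ℝ → ℝ) : Prop :=
  (∃ a > (0 : ℝ), ConvexOrderOn f p (Set.Ioi a)) ∨
    (∃ a > (0 : ℝ), ConvexOrderOn (fun x => -f x) p (Set.Ioi a))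

/-- The class `D^p`: functions with `Δ^p f (n) → 0` as `n → ∞` along the integers. -/
def DD (p : ℕ) (f : ℝ → ℝ) : Prop :=
  Filter.Tendsto (fun n : ℕ => (fdiff^[p] f) n) Filter.atTop (nhds 0)

/-- The digamma function `ψ = Γ'/Γ`. -/
noncomputable def digamma (x : ℝ) : ℝ := deriv Real.Gamma x / Real.Gamma x

/-- A multiple-gamma sequence: `G 0 = id`, `G (m+1) (x+1) = G m x * G (m+1) x`,
`G m 1 = 1`, each `G m` is positive and `C^∞` on `(0,∞)`, and the `m`-th derivative
of `ln ∘ G m` is increasing on `(0,∞)`. -/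
def IsMultipleGammaSeq (G : ℕ → ℝ → ℝ) : Prop :=
  (∀ m, ∀ x > (0 : ℝ), 0 < G m x) ∧
  (∀ m, ContDiffOn ℝ (⊤ : ℕ∞) (G m) (Set.Ioi 0)) ∧
  (∀ x > (0 : ℝ), G 0 x = x) ∧
  (∀ m, ∀ x > (0 : ℝ), G (m + 1) (x + 1) = G m x * G (m + 1) x) ∧
  (∀ m, G m 1 = 1) ∧
  (∀ m, StrictMonoOn
    (iteratedDerivWithin m (fun x => Real.log (G m x)) (Set.Ioi 0)) (Set.Ioi 0))


section Aux

open Finset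

lemma gbinom_zero (x : ℝ) : gbinom x 0 = 1 := by simp [gbinom]

lemma gbinom_nat_zero (j : ℕ) : gbinom 0 (j + 1) = 0 := by
  unfold gbinom
  rw [Finset.prod_eq_zero (Finset.mem_range.mpr (Nat.succ_pos j)) (by simp)]
  simp

lemma gbinom_prod_shift (x : ℝ) (j : ℕ) :
    ∏ i ∈ Finset.range (j+1), (x + 1 - i) = (x + 1) * ∏ i ∈ Finset.range j, (x - i) := by
  rw [Finset.prod_range_succ']
  rw [show ∏ i ∈ Finset.range j, (x + 1 - ((i:ℕ)+1:ℕ)) = ∏ i ∈ Finset.range j, (x - i) from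
    Finset.prod_congr rfl fun i _ => by push_cast; ring]
  push_cast
  ring

lemma gbinom_pascal (x : ℝ) (j : ℕ) :
    gbinom (x + 1) (j + 1) = gbinom x (j + 1) + gbinom x j := by
  unfold gbinom
  rw [gbinom_prod_shift, Finset.prod_range_succ, Nat.factorial_succ]
  have hj : (j.factorial : ℝ) ≠ 0 := Nat.cast_ne_zero.mpr j.factorial_ne_zero
  have hj1 : ((j:ℝ) + 1) ≠ 0 := by positivity
  push_cast
  field_simp
  ring

lemma gbinom_nat_pascal (a j : ℕ) :
    gbinom ((a:ℝ) + 1) (j + 1) = gbinom (a:ℝ) (j + 1) + gbinom (a:ℝ) j :=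
  gbinom_pascal _ _

lemma gbinom_vandermonde (x : ℝ) : ∀ (a m : ℕ),
    gbinom (x + a) m = ∑ j ∈ Finset.range (m + 1), gbinom x j * gbinom (a:ℝ) (m - j) := by
  intro a
  induction a with
  | zero =>
    intro m
    rw [Finset.sum_eq_single_of_mem m (Finset.self_mem_range_succ m)]
    · simp [gbinom_zero]
    · intro j hj hne
      have hj' : j < m := by
        have := Finset.mem_range.mp hj; omega
      have : m - j = (m - j - 1) + 1 := by omega
      rw [this, Nat.cast_zero, gbinom_nat_zero, mul_zero]
  | succ a ih =>
    intro m
    match m with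
    | 0 => simp [gbinom_zero]
    | t + 1 =>
      have hcast : ((a + 1 : ℕ) : ℝ) = (a : ℝ) + 1 := by push_cast; ring
      have hL : x + ((a + 1 : ℕ) : ℝ) = (x + a) + 1 := by rw [hcast]; ring
      rw [hL, gbinom_pascal, ih (t+1), ih t]
      have hstep : ∀ j ∈ Finset.range (t + 1),
          gbinom x j * gbinom ((a+1:ℕ):ℝ) (t + 1 - j)
            = gbinom x j * gbinom (a:ℝ) (t + 1 - j) + gbinom x j * gbinom (a:ℝ) (t - j) := by
        intro j hj
        have hj' : j ≤ t := by have := Finset.mem_range.mp hj; omega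
        have h1 : t + 1 - j = (t - j) + 1 := by omega
        rw [h1, hcast, gbinom_nat_pascal, mul_add]
      have hR : ∑ j ∈ Finset.range (t + 1 + 1), gbinom x j * gbinom ((a+1:ℕ):ℝ) (t + 1 - j)
          = (∑ j ∈ Finset.range (t + 1), gbinom x j * gbinom (a:ℝ) (t + 1 - j))
            + (∑ j ∈ Finset.range (t + 1), gbinom x j * gbinom (a:ℝ) (t - j))
            + gbinom x (t + 1) := by
        rw [Finset.sum_range_succ, Finset.sum_congr rfl hstep, Finset.sum_add_distrib,
          Nat.sub_self, gbinom_zero, mul_one]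
      rw [hR, Finset.sum_range_succ, Nat.sub_self, gbinom_zero, mul_one]
      ring

lemma fwdDiff_iter_eq (f : ℕ → ℝ) (j n : ℕ) :
    (fwdDiff 1)^[j] f n
      = ∑ i ∈ Finset.range (j + 1), (j.choose i : ℝ) * (-1) ^ (j - i) * f (n + i) := by
  rw [fwdDiff_iter_eq_sum_shift]
  refine Finset.sum_congr rfl fun i _ => ?_
  simp only [smul_eq_mul, mul_one, zsmul_eq_mul]
  push_cast
  ring

lemma fwdDiff_iter_congr (f₁ f₂ : ℕ → ℝ) (h : ∀ k, 1 ≤ k → f₁ k = f₂ k)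
    (t n : ℕ) (hn : 1 ≤ n) : (fwdDiff 1)^[t] f₁ n = (fwdDiff 1)^[t] f₂ n := by
  rw [fwdDiff_iter_eq, fwdDiff_iter_eq]
  exact Finset.sum_congr rfl fun i _ => by rw [h _ (by omega)]

/-- The partial-sum function `T g j N = ∑_{k=1}^{N-1} C(N-k-1, j) g(k)`. -/
noncomputable def Tsum (g : ℝ → ℝ) (j : ℕ) (N : ℕ) : ℝ :=
  ∑ k ∈ Finset.Icc 1 (N - 1), gbinom ((N : ℝ) - k - 1) j * g k

lemma fwdDiff_Tsum (g : ℝ → ℝ) (j N : ℕ) : fwdDiff 1 (Tsum g (j+1)) N = Tsum g j N := by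
  match N with
  | 0 => simp [fwdDiff, Tsum]
  | M + 1 =>
    show Tsum g (j+1) (M+1+1) - Tsum g (j+1) (M+1) = Tsum g j (M+1)
    unfold Tsum
    rw [show M + 1 + 1 - 1 = M + 1 from rfl, show M + 1 - 1 = M from rfl]
    rw [Finset.sum_Icc_succ_top (by omega : 1 ≤ M + 1)]
    have hlast : gbinom (((M+1+1 : ℕ):ℝ) - ((M+1:ℕ):ℝ) - 1) (j+1) = 0 := by
      rw [show ((M+1+1 : ℕ):ℝ) - ((M+1:ℕ):ℝ) - 1 = 0 by push_cast; ring]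
      exact gbinom_nat_zero j
    rw [hlast, zero_mul, add_zero, ← Finset.sum_sub_distrib]
    refine Finset.sum_congr rfl fun k hk => ?_
    rw [← sub_mul]
    congr 1
    have h1 : ((M+1+1 : ℕ):ℝ) - k - 1 = (((M+1 : ℕ):ℝ) - k - 1) + 1 := by push_cast; ring
    rw [h1, gbinom_pascal]
    ring

lemma fwdDiff_Tsum_zero (g : ℝ → ℝ) (M : ℕ) :
    fwdDiff 1 (Tsum g 0) (M+1) = g ((M+1 : ℕ) : ℝ) := by
  show Tsum g 0 (M+1+1) - Tsum g 0 (M+1) = g ((M+1 : ℕ) : ℝ)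
  unfold Tsum
  simp only [gbinom_zero, one_mul]
  rw [show M + 1 + 1 - 1 = M + 1 from rfl, show M + 1 - 1 = M from rfl]
  rw [Finset.sum_Icc_succ_top (by omega : 1 ≤ M + 1)]
  ring

lemma fwdDiff_iter_Tsum (g : ℝ → ℝ) (m : ℕ) : ∀ j, j ≤ m →
    (fwdDiff 1)^[j] (Tsum g m) = Tsum g (m - j) := by
  intro j
  induction j with
  | zero => intro _; simp
  | succ t ih =>
    intro h
    funext N
    rw [Function.iterate_succ_apply', ih (by omega)]
    have h1 : m - t = (m - (t+1)) + 1 := by omega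
    rw [h1, fwdDiff_Tsum]

lemma fwdDiff_iter_Tsum_tail (g : ℝ → ℝ) (m t n : ℕ) (hn : 1 ≤ n) :
    (fwdDiff 1)^[m + t + 1] (Tsum g m) n = (fwdDiff 1)^[t] (fun k : ℕ => g k) n := by
  rw [show m + t + 1 = t + (m + 1) by omega, Function.iterate_add_apply]
  refine fwdDiff_iter_congr _ _ (fun k hk => ?_) t n hn
  rw [Function.iterate_succ_apply', fwdDiff_iter_Tsum g m m le_rfl, Nat.sub_self]
  match k, hk with
  | M + 1, _ => exact fwdDiff_Tsum_zero g M

lemma first_chunk (g : ℝ → ℝ) (m n : ℕ) (x : ℝ) :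
    ∑ j ∈ Finset.range (m + 1), gbinom x j * Tsum g (m - j) n
      = ∑ k ∈ Finset.Icc 1 (n - 1), gbinom (x + n - k - 1) m * g k := by
  unfold Tsum
  simp only [Finset.mul_sum]
  rw [Finset.sum_comm]
  refine Finset.sum_congr rfl fun k hk => ?_
  obtain ⟨hk1, hk2⟩ := Finset.mem_Icc.mp hk
  have hn2 : 2 ≤ n := by omega
  have hcast : ((n - 1 - k : ℕ) : ℝ) = (n : ℝ) - k - 1 := by
    rw [Nat.cast_sub (by omega), Nat.cast_sub (by omega)]
    push_cast
    ring
  calc ∑ j ∈ Finset.range (m + 1), gbinom x j * (gbinom ((n:ℝ) - k - 1) (m - j) * g k)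
      = (∑ j ∈ Finset.range (m + 1), gbinom x j * gbinom (((n - 1 - k : ℕ)):ℝ) (m - j)) * g k := by
        rw [Finset.sum_mul]
        exact Finset.sum_congr rfl fun j _ => by rw [hcast]; ring
    _ = gbinom (x + ((n - 1 - k : ℕ) : ℝ)) m * g k := by rw [gbinom_vandermonde]
    _ = gbinom (x + n - k - 1) m * g k := by rw [hcast]; ring_nf

end Aux

/-- Alternative expression: for `S(n) = ∑_{k=1}^{n-1} C(n-k-1,m) g(k)`,
`∑_{k=1}^{n-1} C(n-k-1,m) g(k) + ∑_{j=1}^{p+m} C(x,j) Δ^j S(n)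
 = ∑_{k=1}^{n-1} C(x+n-k-1,m) g(k) + ∑_{j=1}^{p} C(x,m+j) Δ^{j-1} g(n)`. -/
theorem stmt_8 (m p n : ℕ) (hn : 0 < n) (x : ℝ) (hx : 0 < x) (g : ℝ → ℝ)
    (S : ℕ → ℝ)
    (hS : ∀ N : ℕ, S N = ∑ k ∈ Finset.Icc 1 (N - 1), gbinom ((N : ℝ) - k - 1) m * g k) :
    (∑ k ∈ Finset.Icc 1 (n - 1), gbinom ((n : ℝ) - k - 1) m * g k) +
      (∑ j ∈ Finset.Icc 1 (p + m), gbinom x j *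
        ∑ i ∈ Finset.range (j + 1), (j.choose i : ℝ) * (-1) ^ (j - i) * S (n + i)) =
    (∑ k ∈ Finset.Icc 1 (n - 1), gbinom (x + n - k - 1) m * g k) +
      ∑ j ∈ Finset.Icc 1 p, gbinom x (m + j) *
        ∑ i ∈ Finset.range j, ((j - 1).choose i : ℝ) * (-1) ^ (j - 1 - i) * g (n + i) := by
  classical
  have hST : S = Tsum g m := funext fun N => hS N
  have hDelta : ∀ j : ℕ,
      (∑ i ∈ Finset.range (j + 1), (j.choose i : ℝ) * (-1) ^ (j - i) * S (n + i))
        = (fwdDiff 1)^[j] (Tsum g m) n := fun j => by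
    rw [hST]; exact (fwdDiff_iter_eq _ j n).symm
  simp only [hDelta]
  have hIcc : ∀ t : ℕ, Finset.Icc 1 t = Finset.Ioc 0 t := fun t => Finset.Icc_add_one_left_eq_Ioc 0 t
  have hsplit :
      (∑ j ∈ Finset.Icc 1 (p + m), gbinom x j * (fwdDiff 1)^[j] (Tsum g m) n)
        = (∑ j ∈ Finset.Icc 1 m, gbinom x j * (fwdDiff 1)^[j] (Tsum g m) n)
          + ∑ j ∈ Finset.Icc (m+1) (m+p), gbinom x j * (fwdDiff 1)^[j] (Tsum g m) n := by
    rw [hIcc, hIcc, Finset.Icc_add_one_left_eq_Ioc,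
      Finset.sum_Ioc_consecutive _ (Nat.zero_le m) (by omega : m ≤ m + p),
      show p + m = m + p by omega]
  rw [hsplit, ← add_assoc]
  have hfirst :
      (∑ k ∈ Finset.Icc 1 (n - 1), gbinom ((n : ℝ) - k - 1) m * g k)
          + (∑ j ∈ Finset.Icc 1 m, gbinom x j * (fwdDiff 1)^[j] (Tsum g m) n)
        = ∑ k ∈ Finset.Icc 1 (n - 1), gbinom (x + n - k - 1) m * g k := by
    have h1 : (∑ j ∈ Finset.Icc 1 m, gbinom x j * (fwdDiff 1)^[j] (Tsum g m) n)
        = ∑ i ∈ Finset.range m, gbinom x (i + 1) * Tsum g (m - (i + 1)) n := by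
      rw [← Finset.Ico_add_one_right_eq_Icc, Finset.sum_Ico_eq_sum_range,
        show m + 1 - 1 = m from rfl]
      refine Finset.sum_congr rfl fun i hi => ?_
      have hi' : i + 1 ≤ m := by have := Finset.mem_range.mp hi; omega
      rw [show 1 + i = i + 1 by omega, fwdDiff_iter_Tsum g m (i+1) hi']
    rw [h1, ← first_chunk g m n x, Finset.sum_range_succ',
      show (∑ k ∈ Finset.Icc 1 (n - 1), gbinom ((n : ℝ) - k - 1) m * g k) = Tsum g m n
      from rfl]
    simp only [Nat.sub_zero, gbinom_zero, one_mul]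
    ring
  rw [hfirst]
  congr 1
  rw [← Finset.Ico_add_one_right_eq_Icc, Finset.sum_Ico_eq_sum_range,
    ← Finset.Ico_add_one_right_eq_Icc, Finset.sum_Ico_eq_sum_range,
    show m + p + 1 - (m + 1) = p by omega, show p + 1 - 1 = p from rfl]
  refine Finset.sum_congr rfl fun i hi => ?_
  rw [show m + 1 + i = m + i + 1 by omega, fwdDiff_iter_Tsum_tail g m i n hn,
    fwdDiff_iter_eq, show m + (1 + i) = m + i + 1 by omega,
    show 1 + i - 1 = i by omega, show 1 + i = i + 1 by omega]
  push_cast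
  ring
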